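/- Let I be a standard dyadic n-partition of [0,1]. Then the diagram H_I is an n × 2n half grid diagram: each of the 2n columns contains exactly one marking, and each of the n rows contains exactly one X and exactly one O. -/

import Mathlib

/-- `IsSD l r` means `[l, r]` is a standard dyadic interval
`[k/2^m, (k+1)/2^m] ⊆ [0,1]` with `m ≥ 0`, `0 ≤ k ≤ 2^m - 1`. -/
def IsSD (l r : ℚ) : Prop :=
  ∃ m k : ℕ, k < 2 ^ m ∧ l = (k : ℚ) / 2 ^ m ∧ r = ((k : ℚ) + 1) / 2 ^ m

/-- A left standard dyadic interval: `[k/2^m, (k+1)/2^m]` with `m ≥ 1` and `k` even. -/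
def IsLeftSD (l r : ℚ) : Prop :=
  ∃ m k : ℕ, 1 ≤ m ∧ k < 2 ^ m ∧ Even k ∧
    l = (k : ℚ) / 2 ^ m ∧ r = ((k : ℚ) + 1) / 2 ^ m

/-- A right standard dyadic interval: `[k/2^m, (k+1)/2^m]` with `m ≥ 1` and `k` odd;
by convention `[0,1]` is also regarded as a right standard dyadic interval. -/
def IsRightSD (l r : ℚ) : Prop :=
  (l = 0 ∧ r = 1) ∨
    ∃ m k : ℕ, 1 ≤ m ∧ k < 2 ^ m ∧ Odd k ∧
      l = (k : ℚ) / 2 ^ m ∧ r = ((k : ℚ) + 1) / 2 ^ m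

/-- The set `S` of all standard dyadic intervals, an interval `[l, r]` being
represented by the pair `(l, r)` of its endpoints. -/
def SDSet : Set (ℚ × ℚ) := {A | IsSD A.1 A.2}

/-- The conjugate `Ā` of a standard dyadic interval `A ≠ [0,1]`:
the adjacent standard dyadic interval of the same length, on the right of `A`
if `A` is left, and on the left of `A` if `A` is right. -/
noncomputable def conjSD (A : ℚ × ℚ) : ℚ × ℚ := by
  classical
  exact if IsLeftSD A.1 A.2 then (A.2, 2 * A.2 - A.1) else (2 * A.1 - A.2, A.1)

/-- The union of two overlapping or adjacent closed intervals, as an interval: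
from the smaller left endpoint to the larger right endpoint.  In particular
`sdJoin A (conjSD A)` represents the interval `A ∪ Ā`. -/
def sdJoin (A B : ℚ × ℚ) : ℚ × ℚ := (min A.1 B.1, max A.2 B.2)

/-- A standard dyadic `n`-partition of `[0,1]`: breakpoints
`0 = a_0 < a_1 < ... < a_n = 1` with every `[a_i, a_{i+1}]` a standard dyadic
interval. -/
structure SDPartition (n : ℕ) where
  pts : Fin (n + 1) → ℚ
  first : pts 0 = 0
  last : pts (Fin.last n) = 1
  mono : StrictMono pts
  sd : ∀ i : Fin n, IsSD (pts i.castSucc) (pts i.succ)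

/-- `S(I)`: the set of intervals `[a_i, a_j]` (`i < j`) with endpoints breakpoints
of `I` that are standard dyadic intervals. -/
def SIn {n : ℕ} (I : SDPartition n) : Set (ℚ × ℚ) :=
  {A | (∃ i j : Fin (n + 1), i < j ∧ A = (I.pts i, I.pts j)) ∧ IsSD A.1 A.2}

/-- The midpoint of an interval. -/
def midQ (A : ℚ × ℚ) : ℚ := (A.1 + A.2) / 2

/-- The length of an interval. -/
def lenQ (A : ℚ × ℚ) : ℚ := A.2 - A.1

/-- `E`: the set of dyadic rationals strictly between 0 and 1. -/
def Edyadic : Set ℚ := {q | ∃ m k : ℕ, 1 ≤ k ∧ k < 2 ^ m ∧ q = (k : ℚ) / 2 ^ m}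

/-- `S_L(I) = S(I) ∩ S_L`. -/
def SLIn {n : ℕ} (I : SDPartition n) : Set (ℚ × ℚ) := {A ∈ SIn I | IsLeftSD A.1 A.2}

/-- `S_R(I) = S(I) ∩ S_R`. -/
def SRIn {n : ℕ} (I : SDPartition n) : Set (ℚ × ℚ) := {A ∈ SIn I | IsRightSD A.1 A.2}

/-- `M(I)`: the set of midpoints of the subintervals of `I`. -/
def MIn {n : ℕ} (I : SDPartition n) : Set ℚ :=
  {q | ∃ i : Fin n, q = midQ (I.pts i.castSucc, I.pts i.succ)}

/-- `E(I)`: the union of `M(I)` with the breakpoints of `I` other than 0 and 1. -/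
def EIn {n : ℕ} (I : SDPartition n) : Set ℚ :=
  MIn I ∪ {q | (∃ i : Fin (n + 1), I.pts i = q) ∧ q ≠ 0 ∧ q ≠ 1}

/-- `SignSpec s` says that `s` takes values in `{+1, -1}` on standard dyadic
intervals, `s([0,1]) = +1`, and for `A ≠ [0,1]`, `s A = s (A ∪ Ā)` if `A` is a
left interval while `s A = - s (A ∪ Ā)` if `A` is a right interval. -/
def SignSpec (s : ℚ × ℚ → ℤ) : Prop :=
  (∀ A ∈ SDSet, s A = 1 ∨ s A = -1) ∧
  s ((0 : ℚ), (1 : ℚ)) = 1 ∧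
  ∀ A ∈ SDSet, A ≠ ((0 : ℚ), (1 : ℚ)) →
    (IsLeftSD A.1 A.2 → s A = s (sdJoin A (conjSD A))) ∧
    (IsRightSD A.1 A.2 → s A = - s (sdJoin A (conjSD A)))

/-- Strict version of the length order `<_len`. -/
def lenLT (A B : ℚ × ℚ) : Prop :=
  lenQ A < lenQ B ∨ (lenQ A = lenQ B ∧ midQ A < midQ B)

/-- `p_x(A)`: one plus the (1-based) rank of `A ∈ S(I)` in the midpoint order. -/
noncomputable def px {n : ℕ} (I : SDPartition n) (A : ℚ × ℚ) : ℕ :=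
  ({B ∈ SIn I | midQ B < midQ A}).ncard + 2

/-- the (1-based) rank of a positive interval `A ∈ S_+(I)` in the length order. -/
noncomputable def pyPos {n : ℕ} (I : SDPartition n) (s : ℚ × ℚ → ℤ) (A : ℚ × ℚ) : ℕ :=
  ({B ∈ SIn I | s B = 1 ∧ lenLT B A}).ncard + 1

/-- `p_y(A)`: the length-order rank of `A` if `s A = +1`, and of its conjugate
otherwise. -/
noncomputable def py {n : ℕ} (I : SDPartition n) (s : ℚ × ℚ → ℤ) (A : ℚ × ℚ) : ℕ :=
  if s A = 1 then pyPos I s A else pyPos I s (conjSD A)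

/-- The cells `(column, row)` of the diagram `H_I` carrying an `X`:
one for each `A ∈ S(I)` with `s A = +1`, at position `(p_x A, p_y A)`. -/
def Xcells {n : ℕ} (I : SDPartition n) (s : ℚ × ℚ → ℤ) : Set (ℕ × ℕ) :=
  {c | ∃ A ∈ SIn I, s A = 1 ∧ c = (px I A, py I s A)}

/-- The cells `(column, row)` of the diagram `H_I` carrying an `O`:
the default `O` in cell `(1, n)`, and one for each `A ∈ S(I)` with `s A = -1`,
at position `(p_x A, p_y A)`. -/
def Ocells {n : ℕ} (I : SDPartition n) (s : ℚ × ℚ → ℤ) : Set (ℕ × ℕ) :=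
  insert ((1 : ℕ), n) {c | ∃ A ∈ SIn I, s A = -1 ∧ c = (px I A, py I s A)}

/-!
Standard dyadic intervals form a laminar family, so an s.d. interval with a breakpoint of `I`
in its interior has both endpoints among the breakpoints. Hence `S(I)` is closed under
conjugation, and the midpoint map is a bijection from `S(I)` onto `E(I)`, the leaf midpoints
together with the interior breakpoints; thus `|S(I)| = 2n - 1`. Conjugation reverses signs and
matches `S_-(I)` with `S_+(I) \ {[0,1]}`, so `|S_+(I)| = n`. As ranks in linear orders, `p_x` is a
bijection from `S(I)` onto `[2, 2n]` and `p_y` one from `S_+(I)` onto `[1, n]` sending `[0,1]`,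
the longest interval, to `n`. The `O` in a row `r < n` is the conjugate of the positive interval
of rank `r`, and the one in row `n` is the extra `O` in column 1.
-/

open Set

def sdInterval (m k : ℕ) : ℚ × ℚ := ((k : ℚ) / 2 ^ m, ((k : ℚ) + 1) / 2 ^ m)

lemma sdInterval_zero_zero : sdInterval 0 0 = (0, 1) := by norm_num [sdInterval]

lemma isSD_iff {A : ℚ × ℚ} : IsSD A.1 A.2 ↔ ∃ m k, k < 2 ^ m ∧ A = sdInterval m k := by
  simp [IsSD, sdInterval, Prod.ext_iff]

lemma isSD_sdInterval {m k : ℕ} (hk : k < 2 ^ m) : IsSD (sdInterval m k).1 (sdInterval m k).2 :=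
  isSD_iff.2 ⟨m, k, hk, rfl⟩

lemma sdInterval_fst_lt_snd (m k : ℕ) : (sdInterval m k).1 < (sdInterval m k).2 :=
  div_lt_div_of_pos_right (lt_add_one _) (by positivity)

lemma fst_lt_midQ {A : ℚ × ℚ} (h : A.1 < A.2) : A.1 < midQ A := by
  unfold midQ; linarith

lemma midQ_lt_snd {A : ℚ × ℚ} (h : A.1 < A.2) : midQ A < A.2 := by
  unfold midQ; linarith

lemma IsSD.lt {l r : ℚ} (h : IsSD l r) : l < r := by
  obtain ⟨m, k, -, rfl, rfl⟩ := h
  exact sdInterval_fst_lt_snd m k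

lemma IsSD.nonneg {l r : ℚ} (h : IsSD l r) : 0 ≤ l := by
  obtain ⟨m, k, -, rfl, -⟩ := h
  positivity

lemma IsSD.le_one {l r : ℚ} (h : IsSD l r) : r ≤ 1 := by
  obtain ⟨m, k, hk, -, rfl⟩ := h
  rw [div_le_one (by positivity)]
  exact_mod_cast hk

lemma lenQ_sdInterval (m k : ℕ) : lenQ (sdInterval m k) = 1 / 2 ^ m := by
  simp only [lenQ, sdInterval]; ring

lemma sdInterval_injective {m k m' k' : ℕ} (h : sdInterval m k = sdInterval m' k') :
    m = m' ∧ k = k' := by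
  have hm : m = m' := by
    have := congrArg lenQ h
    rw [lenQ_sdInterval, lenQ_sdInterval, one_div, one_div, inv_inj] at this
    exact Nat.pow_right_injective le_rfl (by exact_mod_cast this)
  subst hm
  have hk := congrArg Prod.fst h
  simp only [sdInterval] at hk
  exact ⟨rfl, by exact_mod_cast (div_left_inj' (by positivity)).1 hk⟩

lemma midQ_sdInterval (m k : ℕ) :
    midQ (sdInterval m k) = ((2 * k + 1 : ℕ) : ℚ) / 2 ^ (m + 1) := by
  simp only [midQ, sdInterval]; push_cast; field_simp; ring

/-- A dyadic midpoint `(2k+1)/2^(m+1)` is a fraction in lowest terms. -/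
lemma midQ_injOn : InjOn midQ SDSet := by
  intro A hA B hB h
  obtain ⟨m, k, -, rfl⟩ := isSD_iff.1 hA
  obtain ⟨m', k', -, rfl⟩ := isSD_iff.1 hB
  rw [midQ_sdInterval, midQ_sdInterval] at h
  have hcop (m k : ℕ) : Nat.Coprime (2 * k + 1) (2 ^ (m + 1)) :=
    Nat.Coprime.pow_right _ (Nat.coprime_two_right.2 (odd_two_mul_add_one k))
  obtain ⟨hnum, hden⟩ := Rat.div_int_inj (a := (2 * k + 1 : ℕ)) (b := (2 ^ (m + 1) : ℕ))
    (c := (2 * k' + 1 : ℕ)) (d := (2 ^ (m' + 1) : ℕ)) (by positivity) (by positivity)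
    (hcop m k) (hcop m' k') (by push_cast at h ⊢; exact h)
  have hm : m = m' := by
    have := Nat.pow_right_injective le_rfl (by exact_mod_cast hden : 2 ^ (m + 1) = 2 ^ (m' + 1))
    omega
  have hk : k = k' := by omega
  rw [hm, hk]

lemma sdInterval_nested_of_overlap {m k p l : ℕ} (hmp : m ≤ p)
    (h₁ : (sdInterval m k).1 < (sdInterval p l).2)
    (h₂ : (sdInterval p l).1 < (sdInterval m k).2) :
    (sdInterval m k).1 ≤ (sdInterval p l).1 ∧ (sdInterval p l).2 ≤ (sdInterval m k).2 := by
  obtain ⟨d, rfl⟩ := Nat.exists_eq_add_of_le hmp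
  have hk : sdInterval m k =
      (((k * 2 ^ d : ℕ) : ℚ) / 2 ^ (m + d),
        ((k * 2 ^ d + 2 ^ d : ℕ) : ℚ) / 2 ^ (m + d)) := by
    simp only [sdInterval, pow_add]; push_cast; field_simp
  have hl : sdInterval (m + d) l =
      (((l : ℕ) : ℚ) / 2 ^ (m + d), ((l + 1 : ℕ) : ℚ) / 2 ^ (m + d)) := by
    simp [sdInterval]
  simp only [hk, hl,
    div_lt_div_iff_of_pos_right (by positivity : (0 : ℚ) < 2 ^ (m + d)),
    div_le_div_iff_of_pos_right (by positivity : (0 : ℚ) < 2 ^ (m + d)), Nat.cast_lt,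
    Nat.cast_le] at h₁ h₂ ⊢
  omega

lemma IsSD.nested_of_overlap {a b c d : ℚ} (hab : IsSD a b) (hcd : IsSD c d)
    (h₁ : a < d) (h₂ : c < b) : (a ≤ c ∧ d ≤ b) ∨ (c ≤ a ∧ b ≤ d) := by
  obtain ⟨m, k, -, ha, hb⟩ := hab
  obtain ⟨p, l, -, hc, hd⟩ := hcd
  subst ha hb hc hd
  rcases le_total m p with hmp | hpm
  · exact .inl (sdInterval_nested_of_overlap (k := k) (l := l) hmp h₁ h₂)
  · exact .inr (sdInterval_nested_of_overlap (k := l) (l := k) hpm h₂ h₁)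

section Children

variable {m j : ℕ}

@[simp] lemma sdInterval_two_mul_fst : (sdInterval (m + 1) (2 * j)).1 = (sdInterval m j).1 := by
  simp only [sdInterval, pow_succ]; push_cast; field_simp

@[simp] lemma sdInterval_two_mul_snd : (sdInterval (m + 1) (2 * j)).2 = midQ (sdInterval m j) := by
  simp only [sdInterval, midQ, pow_succ]; push_cast; field_simp; ring

@[simp] lemma sdInterval_two_mul_add_one_fst :
    (sdInterval (m + 1) (2 * j + 1)).1 = midQ (sdInterval m j) := by
  simp only [sdInterval, midQ, pow_succ]; push_cast; field_simp; ring

@[simp] lemma sdInterval_two_mul_add_one_snd :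
    (sdInterval (m + 1) (2 * j + 1)).2 = (sdInterval m j).2 := by
  simp only [sdInterval, pow_succ]; push_cast; field_simp; ring

lemma sdInterval_succ_ne_top (k : ℕ) : sdInterval (m + 1) k ≠ (0, 1) := by
  rw [← sdInterval_zero_zero]
  intro h
  exact Nat.succ_ne_zero m (sdInterval_injective h).1

lemma isLeftSD_sdInterval_two_mul (hj : j < 2 ^ m) :
    IsLeftSD (sdInterval (m + 1) (2 * j)).1 (sdInterval (m + 1) (2 * j)).2 :=
  ⟨m + 1, 2 * j, by omega, by rw [pow_succ]; omega, even_two_mul j, rfl, rfl⟩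

lemma isRightSD_sdInterval_two_mul_add_one (hj : j < 2 ^ m) :
    IsRightSD (sdInterval (m + 1) (2 * j + 1)).1 (sdInterval (m + 1) (2 * j + 1)).2 :=
  .inr ⟨m + 1, 2 * j + 1, by omega, by rw [pow_succ]; omega, odd_two_mul_add_one j, rfl, rfl⟩

lemma not_isLeftSD_sdInterval_two_mul_add_one :
    ¬ IsLeftSD (sdInterval (m + 1) (2 * j + 1)).1 (sdInterval (m + 1) (2 * j + 1)).2 := by
  rintro ⟨p, k, -, -, hk, h₁, h₂⟩
  obtain ⟨-, rfl⟩ := sdInterval_injective (Prod.ext h₁ h₂)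
  exact Nat.not_even_two_mul_add_one j hk

lemma conjSD_sdInterval_two_mul (hj : j < 2 ^ m) :
    conjSD (sdInterval (m + 1) (2 * j)) = sdInterval (m + 1) (2 * j + 1) := by
  simp only [conjSD]
  rw [if_pos (isLeftSD_sdInterval_two_mul hj)]
  ext <;> simp only [sdInterval] <;> push_cast <;> ring

lemma conjSD_sdInterval_two_mul_add_one :
    conjSD (sdInterval (m + 1) (2 * j + 1)) = sdInterval (m + 1) (2 * j) := by
  simp only [conjSD]
  rw [if_neg not_isLeftSD_sdInterval_two_mul_add_one]
  ext <;> simp only [sdInterval] <;> push_cast <;> ring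

lemma sdJoin_sdInterval_two_mul :
    sdJoin (sdInterval (m + 1) (2 * j)) (sdInterval (m + 1) (2 * j + 1)) = sdInterval m j := by
  have h := sdInterval_fst_lt_snd m j
  simp only [sdJoin, sdInterval_two_mul_fst, sdInterval_two_mul_snd, sdInterval_two_mul_add_one_fst,
    sdInterval_two_mul_add_one_snd, min_eq_left (fst_lt_midQ h).le, max_eq_right (midQ_lt_snd h).le]

lemma sdJoin_sdInterval_two_mul_add_one :
    sdJoin (sdInterval (m + 1) (2 * j + 1)) (sdInterval (m + 1) (2 * j)) = sdInterval m j := by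
  rw [sdJoin, min_comm, max_comm]
  exact sdJoin_sdInterval_two_mul

section Sign

variable {s : ℚ × ℚ → ℤ} (hs : SignSpec s) (hj : j < 2 ^ m)
include hs hj

lemma SignSpec.apply_sdInterval_two_mul : s (sdInterval (m + 1) (2 * j)) = s (sdInterval m j) := by
  rw [(hs.2.2 _ (isSD_sdInterval (by rw [pow_succ]; omega)) (sdInterval_succ_ne_top _)).1
    (isLeftSD_sdInterval_two_mul hj), conjSD_sdInterval_two_mul hj, sdJoin_sdInterval_two_mul]

lemma SignSpec.apply_sdInterval_two_mul_add_one :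
    s (sdInterval (m + 1) (2 * j + 1)) = - s (sdInterval m j) := by
  rw [(hs.2.2 _ (isSD_sdInterval (by rw [pow_succ]; omega)) (sdInterval_succ_ne_top _)).2
    (isRightSD_sdInterval_two_mul_add_one hj), conjSD_sdInterval_two_mul_add_one,
    sdJoin_sdInterval_two_mul_add_one]

end Sign

end Children

lemma exists_sdInterval_child {A : ℚ × ℚ} (hA : IsSD A.1 A.2) (hne : A ≠ (0, 1)) :
    ∃ m j, j < 2 ^ m ∧
      (A = sdInterval (m + 1) (2 * j) ∨ A = sdInterval (m + 1) (2 * j + 1)) := by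
  obtain ⟨_ | m, k, hk, rfl⟩ := isSD_iff.1 hA
  · obtain rfl : k = 0 := by simpa using hk
    exact absurd sdInterval_zero_zero hne
  · obtain ⟨j, rfl | rfl⟩ := Nat.even_or_odd' k
    all_goals exact ⟨m, j, by rw [pow_succ] at hk; omega, by simp⟩

section Conjugate

variable {A : ℚ × ℚ} (hA : IsSD A.1 A.2) (hne : A ≠ (0, 1))
include hA hne

lemma conjSD_conjSD : conjSD (conjSD A) = A := by
  obtain ⟨m, j, hj, rfl | rfl⟩ := exists_sdInterval_child hA hne
  · rw [conjSD_sdInterval_two_mul hj, conjSD_sdInterval_two_mul_add_one]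
  · rw [conjSD_sdInterval_two_mul_add_one, conjSD_sdInterval_two_mul hj]

lemma conjSD_ne_top : conjSD A ≠ (0, 1) := by
  obtain ⟨m, j, hj, rfl | rfl⟩ := exists_sdInterval_child hA hne
  · rw [conjSD_sdInterval_two_mul hj]; exact sdInterval_succ_ne_top _
  · rw [conjSD_sdInterval_two_mul_add_one]; exact sdInterval_succ_ne_top _

lemma lenQ_lt_one : lenQ A < 1 := by
  obtain ⟨m, j, hj, rfl | rfl⟩ := exists_sdInterval_child hA hne
  all_goals
    rw [lenQ_sdInterval, div_lt_one (by positivity)]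
    exact one_lt_pow₀ one_lt_two (Nat.succ_ne_zero m)

lemma SignSpec.apply_conjSD {s : ℚ × ℚ → ℤ} (hs : SignSpec s) : s (conjSD A) = - s A := by
  obtain ⟨m, j, hj, rfl | rfl⟩ := exists_sdInterval_child hA hne
  · rw [conjSD_sdInterval_two_mul hj, hs.apply_sdInterval_two_mul_add_one hj,
      hs.apply_sdInterval_two_mul hj]
  · rw [conjSD_sdInterval_two_mul_add_one, hs.apply_sdInterval_two_mul hj,
      hs.apply_sdInterval_two_mul_add_one hj, neg_neg]

end Conjugate

lemma IsSD.fst_midQ {A : ℚ × ℚ} (h : IsSD A.1 A.2) : IsSD A.1 (midQ A) := by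
  obtain ⟨m, k, hk, rfl⟩ := isSD_iff.1 h
  simpa using isSD_sdInterval (m := m + 1) (k := 2 * k) (by rw [pow_succ]; omega)

lemma IsSD.midQ_snd {A : ℚ × ℚ} (h : IsSD A.1 A.2) : IsSD (midQ A) A.2 := by
  obtain ⟨m, k, hk, rfl⟩ := isSD_iff.1 h
  simpa using isSD_sdInterval (m := m + 1) (k := 2 * k + 1) (by rw [pow_succ]; omega)

lemma exists_sdInterval_midQ_eq {M k : ℕ} (hk₀ : k ≠ 0) (hk : k < 2 ^ M) :
    ∃ m j, j < 2 ^ m ∧ midQ (sdInterval m j) = (k : ℚ) / 2 ^ M := by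
  obtain ⟨v, o, ⟨j, rfl⟩, rfl⟩ := Nat.exists_eq_two_pow_mul_odd hk₀
  obtain ⟨m, rfl⟩ : ∃ m, M = v + (m + 1) := by
    refine ⟨M - v - 1, ?_⟩
    by_contra! h
    have : 2 ^ M ≤ 2 ^ v * (2 * j + 1) :=
      (Nat.pow_le_pow_right two_pos (by omega)).trans (Nat.le_mul_of_pos_right _ (by omega))
    omega
  refine ⟨m, j, ?_, ?_⟩
  · rw [pow_add, pow_succ] at hk
    have := Nat.lt_of_mul_lt_mul_left hk
    omega
  · rw [midQ_sdInterval, pow_add]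
    push_cast
    field_simp
    ring

lemma Fin.exists_not_castSucc_and_succ {n : ℕ} {P : Fin (n + 1) → Prop} (h₀ : ¬ P 0)
    (hlast : P (Fin.last n)) : ∃ i : Fin n, ¬ P i.castSucc ∧ P i.succ := by
  induction n with
  | zero => exact absurd hlast h₀
  | succ n ih =>
    by_cases h : P (Fin.last n).castSucc
    · obtain ⟨i, hi, hi'⟩ := ih (P := P ∘ Fin.castSucc) h₀ h
      exact ⟨i.castSucc, hi, by rw [Fin.succ_castSucc]; exact hi'⟩
    · exact ⟨Fin.last n, h, hlast⟩

lemma Set.Finite.bijOn_ncard_lt {β α : Type*} [LinearOrder α] {T : Set β} (hT : T.Finite)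
    {f : β → α} (hf : InjOn f T) :
    BijOn (fun x ↦ {y ∈ T | f y < f x}.ncard) T (Iio T.ncard) := by
  have hmaps : MapsTo (fun x ↦ {y ∈ T | f y < f x}.ncard) T (Iio T.ncard) := fun x hx ↦
    ncard_lt_ncard ⟨fun _ hy ↦ hy.1, fun h ↦ (h hx).2.false⟩ hT
  have hmono {x y : β} (hx : x ∈ T) (hxy : f x < f y) :
      {z ∈ T | f z < f x}.ncard < {z ∈ T | f z < f y}.ncard :=
    ncard_lt_ncard
      ⟨fun _ hz ↦ ⟨hz.1, hz.2.trans hxy⟩, fun h ↦ (h ⟨hx, hxy⟩).2.false⟩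
      (hT.subset fun _ hz ↦ hz.1)
  have hinj : InjOn (fun x ↦ {y ∈ T | f y < f x}.ncard) T := by
    intro x hx y hy hxy
    rcases lt_trichotomy (f x) (f y) with h | h | h
    · exact absurd hxy (hmono hx h).ne
    · exact hf hx hy h
    · exact absurd hxy (hmono hy h).ne'
  have himage := eq_of_subset_of_ncard_le hmaps.image_subset
    (by rw [ncard_Iio_nat, hinj.ncard_image]) (finite_Iio _)
  exact ⟨hmaps, hinj, himage.superset⟩

lemma Set.Finite.bijOn_ncard_lt_add {β α : Type*} [LinearOrder α] {T : Set β} (hT : T.Finite)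
    {f : β → α} (hf : InjOn f T) (c : ℕ) :
    BijOn (fun x ↦ {y ∈ T | f y < f x}.ncard + c) T (Ico c (T.ncard + c)) := by
  have hshift : BijOn (· + c) (Iio T.ncard) (Ico c (T.ncard + c)) := by
    refine ⟨fun x hx ↦ ?_, (add_left_injective c).injOn, fun y hy ↦ ⟨y - c, ?_, ?_⟩⟩ <;>
      simp only [mem_Iio, mem_Ico] at * <;> omega
  exact hshift.comp (hT.bijOn_ncard_lt hf)

def lenKey (A : ℚ × ℚ) : ℚ ×ₗ ℚ := toLex (lenQ A, midQ A)

lemma lenLT_iff_lenKey_lt {A B : ℚ × ℚ} : lenLT A B ↔ lenKey A < lenKey B := by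
  rw [lenKey, lenKey, Prod.Lex.lt_iff]
  rfl

lemma lenKey_injOn : InjOn lenKey SDSet := fun _ hA _ hB h ↦
  midQ_injOn hA hB (congrArg Prod.snd (toLex.injective h))

def SPosIn {n : ℕ} (I : SDPartition n) (s : ℚ × ℚ → ℤ) : Set (ℚ × ℚ) :=
  {A ∈ SIn I | s A = 1}

def SNegIn {n : ℕ} (I : SDPartition n) (s : ℚ × ℚ → ℤ) : Set (ℚ × ℚ) :=
  {A ∈ SIn I | s A = -1}

namespace SDPartition

lemma pos {n : ℕ} (I : SDPartition n) : 0 < n := by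
  rcases Nat.eq_zero_or_pos n with rfl | h
  · have : (1 : ℚ) = 0 := I.last.symm.trans I.first
    norm_num at this
  · exact h

variable {n : ℕ} (I : SDPartition n)

lemma mem_SIn_iff {A : ℚ × ℚ} :
    A ∈ SIn I ↔ IsSD A.1 A.2 ∧ A.1 ∈ range I.pts ∧ A.2 ∈ range I.pts := by
  constructor
  · rintro ⟨⟨i, j, -, rfl⟩, hA⟩
    exact ⟨hA, ⟨i, rfl⟩, ⟨j, rfl⟩⟩
  · rintro ⟨hA, ⟨i, hi⟩, ⟨j, hj⟩⟩
    refine ⟨⟨i, j, I.mono.lt_iff_lt.1 ?_, by rw [hi, hj]⟩, hA⟩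
    rw [hi, hj]
    exact hA.lt

lemma top_mem_SIn : ((0 : ℚ), (1 : ℚ)) ∈ SIn I :=
  I.mem_SIn_iff.2 ⟨sdInterval_zero_zero ▸ isSD_sdInterval (by norm_num), ⟨0, I.first⟩,
    ⟨_, I.last⟩⟩

lemma leaf_mem_SIn (i : Fin n) : (I.pts i.castSucc, I.pts i.succ) ∈ SIn I :=
  I.mem_SIn_iff.2 ⟨I.sd i, ⟨_, rfl⟩, ⟨_, rfl⟩⟩

lemma finite_SIn : (SIn I).Finite :=
  ((finite_range I.pts).prod (finite_range I.pts)).subset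
    fun _ hA ↦ ⟨(I.mem_SIn_iff.1 hA).2.1, (I.mem_SIn_iff.1 hA).2.2⟩

lemma notMem_range_of_mem_leaf {q : ℚ} (i : Fin n) (h₁ : I.pts i.castSucc < q)
    (h₂ : q < I.pts i.succ) : q ∉ range I.pts := by
  rintro ⟨t, rfl⟩
  have h₁ := Fin.castSucc_lt_iff_succ_le.1 (I.mono.lt_iff_lt.1 h₁)
  exact (I.mono.lt_iff_lt.1 h₂).not_ge h₁

lemma exists_leaf_of_mem_Ico {q : ℚ} (h₀ : 0 ≤ q) (h₁ : q < 1) :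
    ∃ i : Fin n, I.pts i.castSucc ≤ q ∧ q < I.pts i.succ := by
  obtain ⟨i, hi, hi'⟩ := Fin.exists_not_castSucc_and_succ (P := fun t ↦ q < I.pts t)
    (by simpa [I.first] using h₀) (by simpa [I.last] using h₁)
  exact ⟨i, not_lt.1 hi, hi'⟩

lemma exists_leaf_of_mem_Ioc {q : ℚ} (h₀ : 0 < q) (h₁ : q ≤ 1) :
    ∃ i : Fin n, I.pts i.castSucc < q ∧ q ≤ I.pts i.succ := by
  obtain ⟨i, hi, hi'⟩ := Fin.exists_not_castSucc_and_succ (P := fun t ↦ q ≤ I.pts t)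
    (by simpa [I.first] using h₀) (by simpa [I.last] using h₁)
  exact ⟨i, not_le.1 hi, hi'⟩

/-- Laminarity against the leaf containing an endpoint: the leaf cannot contain the
interval, since it contains no breakpoint in its interior. -/
lemma endpoints_mem_range {l r p : ℚ} (h : IsSD l r) (hp : p ∈ range I.pts) (hlp : l < p)
    (hpr : p < r) : l ∈ range I.pts ∧ r ∈ range I.pts := by
  have hl := h.nonneg
  have hr := h.le_one
  constructor
  · obtain ⟨i, hi₁, hi₂⟩ := I.exists_leaf_of_mem_Ico hl (by linarith)
    rcases h.nested_of_overlap (I.sd i) hi₂ (by linarith) with ⟨hli, -⟩ | ⟨-, hri⟩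
    · exact ⟨_, le_antisymm hi₁ hli⟩
    · exact absurd hp (I.notMem_range_of_mem_leaf i (by linarith) (by linarith))
  · obtain ⟨i, hi₁, hi₂⟩ := I.exists_leaf_of_mem_Ioc (by linarith) hr
    rcases h.nested_of_overlap (I.sd i) (by linarith) hi₁ with ⟨-, hri⟩ | ⟨hil, -⟩
    · exact ⟨_, le_antisymm hri hi₂⟩
    · exact absurd hp (I.notMem_range_of_mem_leaf i (by linarith) (by linarith))

lemma midQ_mem_range {A : ℚ × ℚ} {p : ℚ} (h : IsSD A.1 A.2) (hp : p ∈ range I.pts)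
    (hlp : A.1 < p) (hpr : p < A.2) : midQ A ∈ range I.pts := by
  rcases lt_trichotomy p (midQ A) with hlt | rfl | hgt
  · exact (I.endpoints_mem_range h.fst_midQ hp hlp hlt).2
  · exact hp
  · exact (I.endpoints_mem_range h.midQ_snd hp hgt hpr).1

lemma sdInterval_mem_SIn_of_sibling {m j : ℕ} (hj : j < 2 ^ m)
    (h : sdInterval (m + 1) (2 * j) ∈ SIn I ∨ sdInterval (m + 1) (2 * j + 1) ∈ SIn I) :
    sdInterval (m + 1) (2 * j) ∈ SIn I ∧ sdInterval (m + 1) (2 * j + 1) ∈ SIn I := by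
  have hP := sdInterval_fst_lt_snd m j
  have hmid : midQ (sdInterval m j) ∈ range I.pts := by
    rcases h with h | h
    · simpa using (I.mem_SIn_iff.1 h).2.2
    · simpa using (I.mem_SIn_iff.1 h).2.1
  obtain ⟨hl, hr⟩ := I.endpoints_mem_range (isSD_sdInterval hj) hmid (fst_lt_midQ hP)
    (midQ_lt_snd hP)
  have hsd (k : ℕ) (hk : k < 2 * j + 2) :
      IsSD (sdInterval (m + 1) k).1 (sdInterval (m + 1) k).2 :=
    isSD_sdInterval (by rw [pow_succ]; omega)
  exact ⟨I.mem_SIn_iff.2 ⟨hsd _ (by omega), by simpa using hl, by simpa using hmid⟩,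
    I.mem_SIn_iff.2 ⟨hsd _ (by omega), by simpa using hmid, by simpa using hr⟩⟩

lemma conjSD_mem_SIn {A : ℚ × ℚ} (hA : A ∈ SIn I) (hne : A ≠ (0, 1)) :
    conjSD A ∈ SIn I := by
  obtain ⟨m, j, hj, rfl | rfl⟩ := exists_sdInterval_child hA.2 hne
  · rw [conjSD_sdInterval_two_mul hj]
    exact (I.sdInterval_mem_SIn_of_sibling hj (.inl hA)).2
  · rw [conjSD_sdInterval_two_mul_add_one]
    exact (I.sdInterval_mem_SIn_of_sibling hj (.inr hA)).1

lemma midQ_mem_EIn {A : ℚ × ℚ} (hA : A ∈ SIn I) : midQ A ∈ EIn I := by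
  obtain ⟨⟨i, j, hij, rfl⟩, hA⟩ := hA
  obtain ⟨i, rfl⟩ := Fin.exists_castSucc_eq.2 (hij.trans_le (Fin.le_last j)).ne
  rcases (Fin.castSucc_lt_iff_succ_le.1 hij).eq_or_lt with rfl | hlt
  · exact .inl ⟨i, rfl⟩
  · have h₀ := hA.nonneg
    have h₁ := hA.le_one
    have hlo := fst_lt_midQ hA.lt
    have hhi := midQ_lt_snd hA.lt
    refine .inr ⟨I.midQ_mem_range hA ⟨i.succ, rfl⟩ (I.mono Fin.castSucc_lt_succ) (I.mono hlt),
      ?_, ?_⟩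
    · exact (lt_of_le_of_lt h₀ hlo).ne'
    · exact (lt_of_lt_of_le hhi h₁).ne

lemma exists_mem_SIn_midQ_eq {q : ℚ} (hq : q ∈ EIn I) : ∃ A ∈ SIn I, midQ A = q := by
  rcases hq with ⟨i, rfl⟩ | ⟨⟨t, rfl⟩, h₀, h₁⟩
  · exact ⟨_, I.leaf_mem_SIn i, rfl⟩
  obtain ⟨t, rfl⟩ :=
    Fin.exists_castSucc_eq.2 fun h : t = Fin.last n ↦ h₁ (by rw [h, I.last])
  obtain ⟨M, k, hk, hq, -⟩ := I.sd t
  obtain ⟨m, j, hj, hmid⟩ := exists_sdInterval_midQ_eq (by rintro rfl; simp_all) hk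
  rw [← hq] at hmid
  have hP := sdInterval_fst_lt_snd m j
  obtain ⟨hl, hr⟩ := I.endpoints_mem_range (isSD_sdInterval hj) ⟨t.castSucc, hmid.symm⟩
    (fst_lt_midQ hP) (midQ_lt_snd hP)
  exact ⟨_, I.mem_SIn_iff.2 ⟨isSD_sdInterval hj, hl, hr⟩, hmid⟩

lemma ncard_MIn : (MIn I).ncard = n := by
  have hmono : StrictMono fun i : Fin n ↦ midQ (I.pts i.castSucc, I.pts i.succ) := by
    intro i j hij
    have hi := midQ_lt_snd (A := (_, _)) (I.sd i).lt
    have hj := fst_lt_midQ (A := (_, _)) (I.sd j).lt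
    have := I.mono.monotone (Fin.succ_le_castSucc_iff.2 hij)
    dsimp only at *
    linarith
  have : MIn I = range fun i : Fin n ↦ midQ (I.pts i.castSucc, I.pts i.succ) := by
    ext; simp [MIn, eq_comm]
  rw [this, ncard_range_of_injective hmono.injective, Nat.card_eq_fintype_card, Fintype.card_fin]

lemma ncard_interior_pts :
    {q : ℚ | (∃ i, I.pts i = q) ∧ q ≠ 0 ∧ q ≠ 1}.ncard = n - 1 := by
  have : {q : ℚ | (∃ i, I.pts i = q) ∧ q ≠ 0 ∧ q ≠ 1} = range I.pts \ {0, 1} := by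
    ext; simp [mem_range]
  have hsub : ({0, 1} : Set ℚ) ⊆ range I.pts := by
    rintro q (rfl | rfl)
    exacts [⟨0, I.first⟩, ⟨_, I.last⟩]
  rw [this, ncard_sdiff hsub, ncard_range_of_injective I.mono.injective, ncard_pair zero_ne_one,
    Nat.card_eq_fintype_card, Fintype.card_fin]
  omega

lemma ncard_EIn : (EIn I).ncard = 2 * n - 1 := by
  have hdisj : Disjoint (MIn I) {q : ℚ | (∃ i, I.pts i = q) ∧ q ≠ 0 ∧ q ≠ 1} := by
    rw [disjoint_left]
    rintro _ ⟨i, rfl⟩ ⟨hq, -⟩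
    have hi := (I.sd i).lt
    exact I.notMem_range_of_mem_leaf i (fst_lt_midQ (A := (_, _)) hi)
      (midQ_lt_snd (A := (_, _)) hi) hq
  have hMIn : (MIn I).Finite := (finite_range _).subset fun _ ⟨i, hi⟩ ↦ ⟨i, hi.symm⟩
  rw [EIn, ncard_union_eq hdisj hMIn ((finite_range I.pts).subset fun _ hq ↦ hq.1),
    ncard_MIn, ncard_interior_pts]
  have := I.pos
  omega

lemma ncard_SIn : (SIn I).ncard = 2 * n - 1 := by
  have hinj : InjOn midQ (SIn I) := midQ_injOn.mono fun _ hA ↦ hA.2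
  have himage : midQ '' SIn I = EIn I := by
    refine (image_subset_iff.2 fun _ ↦ I.midQ_mem_EIn).antisymm fun q hq ↦ ?_
    obtain ⟨A, hA, rfl⟩ := I.exists_mem_SIn_midQ_eq hq
    exact mem_image_of_mem _ hA
  rw [← hinj.ncard_image, himage, ncard_EIn]

lemma px_bijOn : BijOn (px I) (SIn I) (Icc 2 (2 * n)) := by
  have h := I.finite_SIn.bijOn_ncard_lt_add (midQ_injOn.mono fun _ hA ↦ hA.2) 2
  have hIco : Ico 2 ((SIn I).ncard + 2) = Icc 2 (2 * n) := by
    ext; simp only [mem_Ico, mem_Icc, I.ncard_SIn]; have := I.pos; omega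
  rwa [hIco] at h

lemma pyPos_eq (s : ℚ × ℚ → ℤ) (A : ℚ × ℚ) :
    pyPos I s A = {B ∈ SPosIn I s | lenKey B < lenKey A}.ncard + 1 := by
  unfold pyPos SPosIn
  congr 2
  ext B
  simp [lenLT_iff_lenKey_lt, and_assoc]

section Signs

variable {s : ℚ × ℚ → ℤ} (hs : SignSpec s)
include hs

lemma top_mem_SPosIn : ((0 : ℚ), (1 : ℚ)) ∈ SPosIn I s := ⟨I.top_mem_SIn, hs.2.1⟩

lemma ne_top_of_mem_SNegIn {A : ℚ × ℚ} (hA : A ∈ SNegIn I s) : A ≠ (0, 1) := by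
  rintro rfl
  have := hA.2
  rw [hs.2.1] at this
  norm_num at this

lemma bijOn_conjSD : BijOn conjSD (SNegIn I s) (SPosIn I s \ {(0, 1)}) := by
  refine InvOn.bijOn ⟨fun A hA ↦ conjSD_conjSD hA.1.2 (I.ne_top_of_mem_SNegIn hs hA),
    fun B hB ↦ conjSD_conjSD hB.1.1.2 hB.2⟩ (fun A hA ↦ ?_) (fun B hB ↦ ?_)
  · have hne := I.ne_top_of_mem_SNegIn hs hA
    refine ⟨⟨I.conjSD_mem_SIn hA.1 hne, ?_⟩, conjSD_ne_top hA.1.2 hne⟩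
    rw [hs.apply_conjSD hA.1.2 hne, hA.2, neg_neg]
  · refine ⟨I.conjSD_mem_SIn hB.1.1 hB.2, ?_⟩
    rw [hs.apply_conjSD hB.1.1.2 hB.2, hB.1.2]

lemma ncard_SPosIn : (SPosIn I s).ncard = n := by
  have hfin : (SIn I).Finite := I.finite_SIn
  have hunion : SIn I = SPosIn I s ∪ SNegIn I s := by
    ext A
    refine ⟨fun hA ↦ (hs.1 A hA.2).imp (⟨hA, ·⟩) (⟨hA, ·⟩), ?_⟩
    rintro (hA | hA)
    exacts [hA.1, hA.1]
  have hdisj : Disjoint (SPosIn I s) (SNegIn I s) :=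
    disjoint_left.2 fun A hA hA' ↦ by have := hA.2.symm.trans hA'.2; norm_num at this
  have hneg : (SNegIn I s).ncard = (SPosIn I s).ncard - 1 := by
    rw [(I.bijOn_conjSD hs).ncard_eq, ncard_sdiff_singleton_of_mem (I.top_mem_SPosIn hs)]
  have hpos : 0 < (SPosIn I s).ncard :=
    (ncard_pos (hfin.subset fun _ hA ↦ hA.1)).2 ⟨_, I.top_mem_SPosIn hs⟩
  have htotal := I.ncard_SIn
  rw [hunion, ncard_union_eq hdisj (hfin.subset fun _ hA ↦ hA.1) (hfin.subset fun _ hA ↦ hA.1),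
    hneg] at htotal
  omega

lemma pyPos_bijOn : BijOn (pyPos I s) (SPosIn I s) (Icc 1 n) := by
  have h := (I.finite_SIn.subset fun _ hA ↦ hA.1 : (SPosIn I s).Finite).bijOn_ncard_lt_add
    (lenKey_injOn.mono fun _ hA ↦ hA.1.2) 1
  have hIco : Ico 1 ((SPosIn I s).ncard + 1) = Icc 1 n := by
    ext; simp only [mem_Ico, mem_Icc, I.ncard_SPosIn hs]; omega
  rw [hIco] at h
  convert h using 1
  ext A
  exact I.pyPos_eq s A

lemma pyPos_top : pyPos I s (0, 1) = n := by
  have : {B ∈ SPosIn I s | lenKey B < lenKey (0, 1)} = SPosIn I s \ {(0, 1)} := by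
    ext B
    refine ⟨fun hB ↦ ⟨hB.1, fun h ↦ (h ▸ hB.2 : lenKey (0, 1) < lenKey (0, 1)).false⟩,
      fun hB ↦ ⟨hB.1, ?_⟩⟩
    rw [← lenLT_iff_lenKey_lt]
    exact .inl ((lenQ_lt_one hB.1.1.2 hB.2).trans_eq (by simp [lenQ]))
  rw [I.pyPos_eq, this, ncard_sdiff_singleton_of_mem (I.top_mem_SPosIn hs), I.ncard_SPosIn hs]
  have := I.pos
  omega

end Signs

section Cells

variable {s : ℚ × ℚ → ℤ}

lemma py_of_pos {A : ℚ × ℚ} (h : s A = 1) : py I s A = pyPos I s A := if_pos h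

lemma py_of_neg {A : ℚ × ℚ} (h : s A = -1) : py I s A = pyPos I s (conjSD A) :=
  if_neg (by rw [h]; decide)

lemma mem_Xcells_iff {c : ℕ × ℕ} :
    c ∈ Xcells I s ↔ ∃ A ∈ SPosIn I s, c = (px I A, pyPos I s A) := by
  constructor
  · rintro ⟨A, hA, h, rfl⟩
    exact ⟨A, ⟨hA, h⟩, by rw [I.py_of_pos h]⟩
  · rintro ⟨A, ⟨hA, h⟩, rfl⟩
    exact ⟨A, hA, h, by rw [I.py_of_pos h]⟩

lemma Xcells_inter_Ocells : Xcells I s ∩ Ocells I s = ∅ := by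
  refine eq_empty_of_forall_notMem ?_
  rintro _ ⟨⟨A, hA, hA₁, rfl⟩, h | ⟨B, hB, hB₁, h⟩⟩
  · have := I.px_bijOn.mapsTo hA
    simp only [mem_Icc, Prod.ext_iff] at this h
    omega
  · obtain rfl := I.px_bijOn.injOn hA hB (congrArg Prod.fst h)
    rw [hA₁] at hB₁
    norm_num at hB₁

variable {I} (hs : SignSpec s)
include hs

lemma mem_cells_iff {c : ℕ × ℕ} :
    c ∈ Xcells I s ∪ Ocells I s ↔ c = (1, n) ∨ ∃ A ∈ SIn I, c = (px I A, py I s A) := by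
  constructor
  · rintro (⟨A, hA, -, rfl⟩ | rfl | ⟨A, hA, -, rfl⟩)
    exacts [.inr ⟨A, hA, rfl⟩, .inl rfl, .inr ⟨A, hA, rfl⟩]
  · rintro (rfl | ⟨A, hA, rfl⟩)
    · exact .inr (mem_insert _ _)
    · rcases hs.1 A hA.2 with h | h
      exacts [.inl ⟨A, hA, h, rfl⟩, .inr (.inr ⟨A, hA, h, rfl⟩)]

lemma mem_Ocells_iff {c : ℕ × ℕ} :
    c ∈ Ocells I s ↔
      c = (1, n) ∨ ∃ B ∈ SPosIn I s \ {(0, 1)}, c = (px I (conjSD B), pyPos I s B) := by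
  refine mem_insert_iff.trans (or_congr_right ⟨?_, ?_⟩)
  · rintro ⟨A, hA, h, rfl⟩
    refine ⟨conjSD A, (I.bijOn_conjSD hs).mapsTo ⟨hA, h⟩, ?_⟩
    rw [conjSD_conjSD hA.2 (I.ne_top_of_mem_SNegIn hs ⟨hA, h⟩), I.py_of_neg h]
  · rintro ⟨B, hB, rfl⟩
    obtain ⟨A, hA, rfl⟩ := (I.bijOn_conjSD hs).surjOn hB
    exact ⟨A, hA.1, hA.2, by rw [conjSD_conjSD hA.1.2 (I.ne_top_of_mem_SNegIn hs hA),
      I.py_of_neg hA.2]⟩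

lemma mem_grid_of_mem_cells {c : ℕ × ℕ} (hc : c ∈ Xcells I s ∪ Ocells I s) :
    1 ≤ c.1 ∧ c.1 ≤ 2 * n ∧ 1 ≤ c.2 ∧ c.2 ≤ n := by
  have hx {A : ℚ × ℚ} (hA : A ∈ SIn I) := I.px_bijOn.mapsTo hA
  have hy {B : ℚ × ℚ} (hB : B ∈ SPosIn I s) := (I.pyPos_bijOn hs).mapsTo hB
  have := I.pos
  rcases hc with hc | hc
  · obtain ⟨A, hA, rfl⟩ := I.mem_Xcells_iff.1 hc
    have := hx hA.1
    have := hy hA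
    simp only [mem_Icc] at *
    omega
  · rcases (mem_Ocells_iff hs).1 hc with rfl | ⟨B, hB, rfl⟩
    · simp only
      omega
    · have := hx (I.conjSD_mem_SIn hB.1.1 hB.2)
      have := hy hB.1
      simp only [mem_Icc] at *
      omega

lemma existsUnique_mem_cells_of_col {col : ℕ} (h₁ : 1 ≤ col) (h₂ : col ≤ 2 * n) :
    ∃! row, (col, row) ∈ Xcells I s ∪ Ocells I s := by
  have hx {A : ℚ × ℚ} (hA : A ∈ SIn I) : 2 ≤ px I A := (I.px_bijOn.mapsTo hA).1
  rcases h₁.eq_or_lt with rfl | h₁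
  · refine ⟨n, (mem_cells_iff hs).2 (.inl rfl), fun row hrow ↦ ?_⟩
    rcases (mem_cells_iff hs).1 hrow with h | ⟨A, hA, h⟩
    · exact (Prod.ext_iff.1 h).2
    · have := hx hA
      have := (Prod.ext_iff.1 h).1
      simp only at this
      omega
  · obtain ⟨A, hA, rfl⟩ := I.px_bijOn.surjOn ⟨h₁, h₂⟩
    refine ⟨py I s A, (mem_cells_iff hs).2 (.inr ⟨A, hA, rfl⟩), fun row hrow ↦ ?_⟩
    rcases (mem_cells_iff hs).1 hrow with h | ⟨B, hB, h⟩
    · have := hx hA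
      have := (Prod.ext_iff.1 h).1
      simp only at this
      omega
    · obtain ⟨h, rfl⟩ := Prod.ext_iff.1 h
      rw [I.px_bijOn.injOn hA hB h]

lemma existsUnique_mem_Xcells_of_row {row : ℕ} (h₁ : 1 ≤ row) (h₂ : row ≤ n) :
    ∃! col, (col, row) ∈ Xcells I s := by
  obtain ⟨A, hA, rfl⟩ := (I.pyPos_bijOn hs).surjOn ⟨h₁, h₂⟩
  refine ⟨px I A, I.mem_Xcells_iff.2 ⟨A, hA, rfl⟩, fun col hcol ↦ ?_⟩
  obtain ⟨B, hB, h⟩ := I.mem_Xcells_iff.1 hcol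
  obtain ⟨rfl, h⟩ := Prod.ext_iff.1 h
  rw [(I.pyPos_bijOn hs).injOn hA hB h]

lemma existsUnique_mem_Ocells_of_row {row : ℕ} (h₁ : 1 ≤ row) (h₂ : row ≤ n) :
    ∃! col, (col, row) ∈ Ocells I s := by
  have htop {B : ℚ × ℚ} (hB : B ∈ SPosIn I s) : pyPos I s B = n ↔ B = (0, 1) := by
    refine ⟨fun h ↦ (I.pyPos_bijOn hs).injOn hB (I.top_mem_SPosIn hs) ?_, ?_⟩
    · rw [h, I.pyPos_top hs]
    · rintro rfl
      exact I.pyPos_top hs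
  rcases h₂.eq_or_lt with rfl | h₂
  · refine ⟨1, (mem_Ocells_iff hs).2 (.inl rfl), fun col hcol ↦ ?_⟩
    rcases (mem_Ocells_iff hs).1 hcol with h | ⟨B, hB, h⟩
    · exact (Prod.ext_iff.1 h).1
    · exact absurd ((htop hB.1).1 (Prod.ext_iff.1 h).2.symm) hB.2
  · obtain ⟨B, hB, rfl⟩ := (I.pyPos_bijOn hs).surjOn ⟨h₁, h₂.le⟩
    have hB' : B ∈ SPosIn I s \ {(0, 1)} := ⟨hB, fun h ↦ h₂.ne ((htop hB).2 h)⟩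
    refine ⟨px I (conjSD B), (mem_Ocells_iff hs).2 (.inr ⟨B, hB', rfl⟩),
      fun col hcol ↦ ?_⟩
    rcases (mem_Ocells_iff hs).1 hcol with h | ⟨C, hC, h⟩
    · exact absurd (Prod.ext_iff.1 h).2 h₂.ne
    · obtain ⟨rfl, h⟩ := Prod.ext_iff.1 h
      rw [(I.pyPos_bijOn hs).injOn hB hC.1 h]

end Cells

end SDPartition

/-- for a standard dyadic `n`-partition `I`, the diagram `H_I` is
an `n × 2n` half grid diagram: all markings lie in the `n × 2n` grid, no cell
carries two markings, each column contains exactly one marking, and each row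
contains exactly one `X` and exactly one `O`. -/
theorem statement_12 {n : ℕ} (I : SDPartition n) (s : ℚ × ℚ → ℤ)
    (hs : SignSpec s) :
    (∀ c ∈ Xcells I s ∪ Ocells I s,
      1 ≤ c.1 ∧ c.1 ≤ 2 * n ∧ 1 ≤ c.2 ∧ c.2 ≤ n) ∧
    Xcells I s ∩ Ocells I s = ∅ ∧
    (∀ col : ℕ, 1 ≤ col → col ≤ 2 * n →
      ∃! row : ℕ, (col, row) ∈ Xcells I s ∪ Ocells I s) ∧
    (∀ row : ℕ, 1 ≤ row → row ≤ n →
      (∃! col : ℕ, (col, row) ∈ Xcells I s) ∧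
      (∃! col : ℕ, (col, row) ∈ Ocells I s)) :=
  ⟨fun _ ↦ SDPartition.mem_grid_of_mem_cells hs, I.Xcells_inter_Ocells,
    fun _ ↦ SDPartition.existsUnique_mem_cells_of_col hs,
    fun _ h₁ h₂ ↦ ⟨SDPartition.existsUnique_mem_Xcells_of_row hs h₁ h₂,
      SDPartition.existsUnique_mem_Ocells_of_row hs h₁ h₂⟩⟩
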